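/- arXiv:2309.16791 — 2 statements merged into one kernel-verified Lean document; each statement's English description precedes it below -/
import Mathlib

section
/- Let H be a δ-hyperbolic geodesic metric space, X a finite nonempty subset of H, and a, b ∈ X points with d(a,b) = diam(X). Let m be the midpoint of a geodesic segment from a to b, and let c be an ε-center of X for some ε > 0. Then d(c, m) ≤ ε + 2δ. -/
/-- The Gromov product `⟨x,y⟩_w`. -/
noncomputable def gromovProd {H : Type*} [MetricSpace H] (w x y : H) : ℝ :=
  (dist x w + dist y w - dist x y) / 2

/-- `f` is a unit-speed geodesic parametrization of a segment from `x` to `y`. -/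
def IsGeodesicParam {H : Type*} [MetricSpace H] (x y : H) (f : ℝ → H) : Prop :=
  f 0 = x ∧ f (dist x y) = y ∧
    ∀ s ∈ Set.Icc (0:ℝ) (dist x y), ∀ t ∈ Set.Icc (0:ℝ) (dist x y),
      dist (f s) (f t) = |s - t|

/-- A geodesic metric space: any two points are joined by a geodesic segment. -/
def IsGeodesicSpace (H : Type*) [MetricSpace H] : Prop :=
  ∀ x y : H, ∃ f : ℝ → H, IsGeodesicParam x y f

/-- All geodesic triangles are `δ`-thin. -/
def ThinTriangles (H : Type*) [MetricSpace H] (δ : ℝ) : Prop :=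
  ∀ (r p q : H) (fp fq : ℝ → H), IsGeodesicParam r p fp → IsGeodesicParam r q fq →
    ∀ t ∈ Set.Icc (0:ℝ) (gromovProd r p q), dist (fp t) (fq t) ≤ δ

/-- A `δ`-hyperbolic geodesic metric space. -/
def IsDeltaHyperbolic (H : Type*) [MetricSpace H] (δ : ℝ) : Prop :=
  IsGeodesicSpace H ∧ ThinTriangles H δ ∧
    ∀ w x y z : H, min (gromovProd w x y) (gromovProd w y z) - δ ≤ gromovProd w x z

/-- The radius of a bounded subset `X`: the infimum of radii of closed balls containing
`X`. -/
noncomputable def setRadius {H : Type*} [MetricSpace H] (X : Set H) : ℝ :=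
  sInf {r : ℝ | ∃ c, X ⊆ Metric.closedBall c r}

/-!
By thinness of the triangle `a, b, x`, the midpoint `m` of `[a,b]` lies within `δ` of the
geodesic `[a,x]` (or `[b,x]`, whichever side of `m` the Gromov products put `x` on), so
`d(x,m) ≤ max (d(a,x), d(b,x)) - d(a,b)/2 + δ`. Since `d(a,b)` is the diameter of `X`, this
gives `r(X) ≤ d(a,b)/2 + δ`; applied to `x = c`, where `d(a,c), d(b,c) ≤ r(X) + ε`, it gives
`d(c,m) ≤ ε + 2δ`.
-/

variable {H : Type*} [MetricSpace H]

theorem IsGeodesicParam.symm {a b : H} {f : ℝ → H} (hf : IsGeodesicParam a b f) :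
    IsGeodesicParam b a (fun t => f (dist a b - t)) := by
  obtain ⟨hf0, hf1, hfd⟩ := hf
  rw [IsGeodesicParam, dist_comm b a]
  refine ⟨by simpa using hf1, by simpa using hf0, fun s hs t ht => ?_⟩
  rw [hfd _ ⟨by linarith [hs.2], by linarith [hs.1]⟩ _ ⟨by linarith [ht.2], by linarith [ht.1]⟩,
    abs_sub_comm]
  ring_nf

theorem gromovProd_le_dist (a b x : H) : gromovProd a b x ≤ dist a x := by
  rw [gromovProd]
  linarith [dist_triangle b x a, dist_comm x a]

theorem gromovProd_add_gromovProd_swap (a b x : H) :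
    gromovProd a b x + gromovProd b a x = dist a b := by
  simp only [gromovProd, dist_comm b a, dist_comm x a, dist_comm x b]
  ring

theorem ThinTriangles.dist_le_of_le_gromovProd {δ : ℝ} (hgeo : IsGeodesicSpace H)
    (hthin : ThinTriangles H δ) {a b : H} {f : ℝ → H} (hf : IsGeodesicParam a b f) (x : H)
    {t : ℝ} (ht₀ : 0 ≤ t) (ht : t ≤ gromovProd a b x) :
    dist x (f t) ≤ dist a x - t + δ := by
  obtain ⟨g, hg⟩ := hgeo a x
  have htx : t ≤ dist a x := ht.trans (gromovProd_le_dist a b x)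
  have hgx : dist (g t) x = dist a x - t := by
    have := hg.2.2 t ⟨ht₀, htx⟩ (dist a x) ⟨dist_nonneg, le_rfl⟩
    rw [hg.2.1] at this
    rw [this, abs_of_nonpos (by linarith)]
    ring
  calc dist x (f t) ≤ dist (g t) x + dist (g t) (f t) := dist_triangle_left _ _ _
    _ ≤ dist a x - t + δ := by
      rw [hgx, dist_comm (g t)]
      linarith [hthin a b x f g hf hg t ⟨ht₀, ht⟩]

theorem ThinTriangles.dist_midpoint_le {δ : ℝ} (hgeo : IsGeodesicSpace H)
    (hthin : ThinTriangles H δ) {a b : H} {f : ℝ → H} (hf : IsGeodesicParam a b f) (x : H) :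
    dist x (f (dist a b / 2)) ≤ max (dist a x) (dist b x) - dist a b / 2 + δ := by
  have hd : 0 ≤ dist a b / 2 := by positivity
  rcases le_total (dist a b / 2) (gromovProd a b x) with h | h
  · have := hthin.dist_le_of_le_gromovProd hgeo hf x hd h
    linarith [le_max_left (dist a x) (dist b x)]
  · have h' : dist b a / 2 ≤ gromovProd b a x := by
      linarith [gromovProd_add_gromovProd_swap a b x, dist_comm a b]
    have := hthin.dist_le_of_le_gromovProd hgeo hf.symm x (by rwa [dist_comm]) h'
    have hmid : dist a b - dist b a / 2 = dist a b / 2 := by rw [dist_comm b a]; ring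
    rw [hmid, dist_comm b a] at this
    linarith [le_max_right (dist a x) (dist b x)]

theorem setRadius_le {X : Set H} (hX : X.Nonempty) {m : H} {r : ℝ}
    (hXm : X ⊆ Metric.closedBall m r) : setRadius X ≤ r := by
  obtain ⟨a, ha⟩ := hX
  refine csInf_le ⟨0, ?_⟩ ⟨m, hXm⟩
  rintro s ⟨c, hc⟩
  exact dist_nonneg.trans (hc ha)

theorem center_vs_midpoint_general {H : Type} [MetricSpace H] (δ : ℝ)
    (hhyp : IsDeltaHyperbolic H δ)
    (X : Finset H) (a b : H) (ha : a ∈ X) (hb : b ∈ X)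
    (hdiam : ∀ p ∈ X, ∀ q ∈ X, dist p q ≤ dist a b)
    (f : ℝ → H) (hf : IsGeodesicParam a b f) (m : H) (hm : m = f (dist a b / 2))
    (ε : ℝ) (c : H)
    (hc : (X : Set H) ⊆ Metric.closedBall c (setRadius (X : Set H) + ε)) :
    dist c m ≤ ε + 2 * δ := by
  obtain ⟨hgeo, hthin, -⟩ := hhyp
  have hmid (x : H) : dist x m ≤ max (dist a x) (dist b x) - dist a b / 2 + δ :=
    hm ▸ hthin.dist_midpoint_le hgeo hf x
  have hrad : setRadius (X : Set H) ≤ dist a b / 2 + δ := by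
    refine setRadius_le (m := m) ⟨a, ha⟩ fun x hx => ?_
    rw [Metric.mem_closedBall]
    linarith [hmid x, max_le (hdiam a ha x hx) (hdiam b hb x hx)]
  have hac : dist a c ≤ setRadius (X : Set H) + ε := hc ha
  have hbc : dist b c ≤ setRadius (X : Set H) + ε := hc hb
  linarith [hmid c, max_le hac hbc]

/-- Lemma 2.3 (center vs midpoint): if `m` is the midpoint of a diameter-realizing segment
`[a,b]` of a finite set `X` and `c` is an `ε`-center of `X`, then `d(c,m) ≤ ε + 2δ`. -/
theorem center_vs_midpoint {H : Type} [MetricSpace H] (δ : ℝ)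
    (hhyp : IsDeltaHyperbolic H δ)
    (X : Finset H) (hX : X.Nonempty) (a b : H) (ha : a ∈ X) (hb : b ∈ X)
    (hdiam : ∀ p ∈ X, ∀ q ∈ X, dist p q ≤ dist a b)
    (f : ℝ → H) (hf : IsGeodesicParam a b f) (m : H) (hm : m = f (dist a b / 2))
    (ε : ℝ) (hε : 0 < ε) (c : H)
    (hc : (X : Set H) ⊆ Metric.closedBall c (setRadius (X : Set H) + ε)) :
    dist c m ≤ ε + 2 * δ :=
  center_vs_midpoint_general δ hhyp X a b ha hb hdiam f hf m hm ε c hc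
end

section
/- Let H be a δ-hyperbolic geodesic metric space with basepoint o, let μ, ε > 0, let V be a finite set partitioned into n colors V = V₁ ⊔ ⋯ ⊔ V_n, and let (Y_v)_{v∈V} be bounded nonempty subsets of H with radii r_v = r(Y_v) and chosen ε-centers c_v. Write d := sup{|p| : p ∈ ⋃_{v∈V} Y_v}; a point p ∈ ⋃_v Y_v is μ-extremal if |p| ≥ d − μ. Assume that for each i and any two distinct v, w ∈ V_i we have r_v = r_w and d(c_v, c_w) > 2μ + (10+2n)δ + 4ε. Then for every sequence v₀, v₁, …, v_m of pairwise distinct elements of V such that for each j < m there is a μ-extremal point lying in Y_{v_j} ∩ Y_{v_{j+1}}, one has m ≤ 2ⁿ − 2. -/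
/-!
Consecutive sets of the path share points at depth `≥ d - μ`, so consecutive points of the
path have Gromov product `≥ d - μ - r - ε` at `o`, and by the four-point condition a chain of
at most `2 ^ n` steps loses only `n * δ`. An `ε`-center of a set of radius `r` lies at depth
`≤ d - r + ε + 4 * δ`. Hence two vertices of one color at most `2 ^ n - 1` apart with no
larger radius between them would have centers within `2 * μ + (8 + 2 * n) * δ + 4 * ε`. So in
every window of the path the vertex of maximal radius has a color seen nowhere else in the
window, and induction on the number of colors bounds the window length by `2 ^ k - 1`.
-/

open Metric Finset

section

variable {H : Type*} [MetricSpace H]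

/-- Gromov's four-point condition, the last clause of `IsDeltaHyperbolic`. -/
def FourPointCondition (H : Type*) [MetricSpace H] (δ : ℝ) : Prop :=
  ∀ w x y z : H, min (gromovProd w x y) (gromovProd w y z) - δ ≤ gromovProd w x z

lemma dist_eq_sub_two_mul_gromovProd (o x y : H) :
    dist x y = dist x o + dist y o - 2 * gromovProd o x y := by
  unfold gromovProd; ring

lemma gromovProd_comm (o x y : H) : gromovProd o x y = gromovProd o y x := by
  unfold gromovProd; rw [dist_comm x y]; ring

lemma dist_sub_dist_le_gromovProd (o x y : H) : dist y o - dist x y ≤ gromovProd o x y := by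
  unfold gromovProd; linarith [dist_triangle y x o, dist_comm x y]

lemma sub_le_gromovProd_of_dist_le {o x y z : H} {L ρ : ℝ} (hx : L ≤ dist x o)
    (hy : L ≤ dist y o) (hxz : dist x z ≤ ρ) (hyz : dist y z ≤ ρ) :
    L - ρ ≤ gromovProd o x y := by
  unfold gromovProd; linarith [dist_triangle_right x y z]

lemma setRadius_le_s19 {Y : Set H} (hY : Y.Nonempty) {c : H} {r : ℝ} (h : Y ⊆ closedBall c r) :
    setRadius Y ≤ r := by
  refine csInf_le ⟨0, ?_⟩ ⟨c, h⟩
  rintro r' ⟨c', hc'⟩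
  obtain ⟨y, hy⟩ := hY
  exact dist_nonneg.trans (mem_closedBall.mp (hc' hy))

lemma IsGeodesicParam.dist_apply_left {x y : H} {f : ℝ → H} (hf : IsGeodesicParam x y f)
    {t : ℝ} (ht : t ∈ Set.Icc 0 (dist x y)) : dist (f t) x = t := by
  rw [← hf.1, hf.2.2 t ht 0 ⟨le_rfl, dist_nonneg⟩, sub_zero, abs_of_nonneg ht.1]

lemma IsGeodesicParam.dist_apply_right {x y : H} {f : ℝ → H} (hf : IsGeodesicParam x y f)
    {t : ℝ} (ht : t ∈ Set.Icc 0 (dist x y)) : dist (f t) y = dist x y - t := by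
  have := hf.2.2 t ht _ ⟨dist_nonneg, le_rfl⟩
  rw [hf.2.1] at this
  rw [this, abs_of_nonpos (by linarith [ht.2])]
  ring

namespace FourPointCondition

variable {δ : ℝ}

lemma nonneg (h : FourPointCondition H δ) (o : H) : 0 ≤ δ := by
  have := h o o o o
  simp only [gromovProd, dist_self, min_self] at this
  linarith

lemma le_gromovProd_of_chain (h : FourPointCondition H δ) (o : H) (x : ℕ → H) {G : ℝ}
    {k a b : ℕ} (hab : a < b) (hk : b - a ≤ 2 ^ k)
    (hx : ∀ j ∈ Ico a b, G ≤ gromovProd o (x j) (x (j + 1))) :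
    G - k * δ ≤ gromovProd o (x a) (x b) := by
  induction k generalizing a b with
  | zero =>
    obtain rfl : b = a + 1 := by rw [pow_zero] at hk; omega
    simpa using hx a (by simp)
  | succ k ih =>
    push_cast
    by_cases hshort : b - a ≤ 2 ^ k
    · linarith [ih hab hshort hx, h.nonneg o]
    · have hleft := ih (a := a) (b := a + 2 ^ k) (by simp) (by omega)
        fun j hj => hx j (by simp only [mem_Ico] at hj ⊢; omega)
      have hright := ih (a := a + 2 ^ k) (b := b) (by omega) (by rw [pow_succ] at hk; omega)
        fun j hj => hx j (by simp only [mem_Ico] at hj ⊢; omega)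
      linarith [h o (x a) (x (a + 2 ^ k)) (x b), le_min hleft hright]

/-- The chain `c a, p a, …, p (b - 1), c b` has `b - a + 1` steps. -/
lemma le_gromovProd_of_path (h : FourPointCondition H δ) (o : H) {c p : ℕ → H} {L ρ : ℝ}
    {a b k : ℕ} (hab : a < b) (hk : b - a + 1 ≤ 2 ^ k)
    (hp : ∀ j ∈ Ico a b,
      L ≤ dist (p j) o ∧ dist (p j) (c j) ≤ ρ ∧ dist (p j) (c (j + 1)) ≤ ρ) :
    L - ρ - k * δ ≤ gromovProd o (c a) (c b) := by
  let x : ℕ → H := fun j => if j ≤ a then c a else if j ≤ b then p (j - 1) else c b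
  have hedge : ∀ j ∈ Ico a (b + 1), L - ρ ≤ gromovProd o (x j) (x (j + 1)) := by
    intro j hj
    simp only [mem_Ico] at hj
    rcases lt_trichotomy j a with hja | rfl | hja
    · omega
    · obtain ⟨hL, hc, -⟩ := hp j (by simp [hab])
      simp only [x, le_refl, if_true, show ¬ j + 1 ≤ j by omega, if_false,
        show j + 1 ≤ b by omega, Nat.add_sub_cancel]
      linarith [dist_sub_dist_le_gromovProd o (c j) (p j), dist_comm (c j) (p j)]
    · obtain ⟨hL, -, hc⟩ := hp (j - 1) (by rw [mem_Ico]; omega)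
      rw [show j - 1 + 1 = j by omega] at hc
      by_cases hjb : j < b
      · obtain ⟨hL', hc', -⟩ := hp j (by rw [mem_Ico]; omega)
        simp only [x, show ¬ j ≤ a by omega, show ¬ j + 1 ≤ a by omega, if_false,
          show j ≤ b by omega, show j + 1 ≤ b by omega, if_true, Nat.add_sub_cancel]
        exact sub_le_gromovProd_of_dist_le hL hL' hc hc'
      · obtain rfl : j = b := by omega
        simp only [x, show ¬ j ≤ a by omega, show ¬ j + 1 ≤ a by omega, if_false,
          le_refl, if_true, show ¬ j + 1 ≤ j by omega]
        rw [gromovProd_comm]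
        linarith [dist_sub_dist_le_gromovProd o (c j) (p (j - 1)), dist_comm (c j) (p (j - 1))]
  have := h.le_gromovProd_of_chain o x (k := k) (by omega : a < b + 1) (by omega) hedge
  simpa [x, show ¬ b + 1 ≤ a by omega, show ¬ b + 1 ≤ b by omega] using this

lemma exists_lt_of_lt_dist (h : FourPointCondition H δ) (o : H) {c p : ℕ → H} {r : ℕ → ℝ}
    {d μ ε : ℝ} {a b k : ℕ} (hab : a < b) (hk : b - a + 1 ≤ 2 ^ k) (hr : r a = r b)
    (hca : dist (c a) o ≤ d - r a + ε + 4 * δ) (hcb : dist (c b) o ≤ d - r b + ε + 4 * δ)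
    (hp : ∀ j ∈ Ico a b, d - μ ≤ dist (p j) o ∧
      dist (p j) (c j) ≤ r j + ε ∧ dist (p j) (c (j + 1)) ≤ r (j + 1) + ε)
    (hfar : 2 * μ + (8 + 2 * k) * δ + 4 * ε < dist (c a) (c b)) :
    ∃ j, a < j ∧ j < b ∧ max (r a) (r b) < r j := by
  by_contra! hlow
  have hle : ∀ j, a ≤ j → j ≤ b → r j ≤ r a := by
    intro j haj hjb
    rcases haj.eq_or_lt with rfl | haj
    · exact le_rfl
    rcases hjb.eq_or_lt with rfl | hjb
    · exact hr.ge
    · simpa [hr] using hlow j haj hjb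
  have hchain := h.le_gromovProd_of_path o (L := d - μ) (ρ := r a + ε) hab hk fun j hj => by
    simp only [mem_Ico] at hj
    obtain ⟨hpo, hpj, hpj'⟩ := hp j (by simp [hj])
    exact ⟨hpo, hpj.trans (by linarith [hle j hj.1 hj.2.le]),
      hpj'.trans (by linarith [hle (j + 1) (by omega) hj.2])⟩
  linarith [dist_eq_sub_two_mul_gromovProd o (c a) (c b)]

lemma subset_closedBall_apply_geodesic (h : FourPointCondition H δ) {o c : H} {f : ℝ → H}
    (hf : IsGeodesicParam o c f) {t : ℝ} (ht : t ∈ Set.Icc 0 (dist o c)) {Y : Set H}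
    {D R : ℝ} (hYo : Y ⊆ closedBall o D) (hYc : Y ⊆ closedBall c R) :
    Y ⊆ closedBall (f t) (max (D - t + 2 * δ) (R - (dist o c - t) + 2 * δ)) := by
  intro y hy
  have hyo : dist y o ≤ D := hYo hy
  have hyc : dist y c ≤ R := hYc hy
  have hto := hf.dist_apply_left ht
  have htc := hf.dist_apply_right ht
  have hgp : gromovProd o (f t) c = t := by
    unfold gromovProd; rw [hto, htc, dist_comm c o]; ring
  have h4 := h o (f t) c y
  rw [hgp] at h4
  have hty := dist_eq_sub_two_mul_gromovProd o (f t) y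
  have hcy := dist_eq_sub_two_mul_gromovProd o c y
  rw [mem_closedBall, dist_comm]
  rcases le_total t (gromovProd o c y) with hle | hle
  · rw [min_eq_left hle] at h4
    exact le_max_of_le_left (by linarith)
  · rw [min_eq_right hle] at h4
    exact le_max_of_le_right (by linarith [dist_comm y c, dist_comm o c])

/-- Otherwise a point of `[o, c]` slightly closer to `o` would be the center of a ball of
radius less than `setRadius Y` containing `Y`. -/
lemma dist_le_of_subset_closedBall (h : FourPointCondition H δ) (hgeo : IsGeodesicSpace H)
    {Y : Set H} (hY : Y.Nonempty) {o c : H} {D R : ℝ} (hYo : Y ⊆ closedBall o D)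
    (hYc : Y ⊆ closedBall c R) :
    dist c o ≤ D + R - 2 * setRadius Y + 4 * δ := by
  have hδ := h.nonneg o
  have hrD := setRadius_le_s19 hY hYo
  have hrR := setRadius_le_s19 hY hYc
  refine le_of_forall_pos_le_add fun η hη => ?_
  set s := R - setRadius Y + 2 * δ + η
  by_cases hs : dist c o ≤ s
  · linarith
  obtain ⟨f, hf⟩ := hgeo o c
  have ht : dist o c - s ∈ Set.Icc 0 (dist o c) := by
    rw [dist_comm o c]; constructor <;> linarith
  have hball := h.subset_closedBall_apply_geodesic hf ht hYo hYc
  have hr := setRadius_le_s19 hY hball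
  rw [sub_sub_cancel, dist_comm o c] at hr
  rcases le_max_iff.mp hr with hr | hr <;> linarith

end FourPointCondition

end

lemma Fin.clamp_eq_of_le {j m : ℕ} (h : j ≤ m) : Fin.clamp j m = ⟨j, Nat.lt_succ_of_le h⟩ :=
  Fin.ext (min_eq_left h)

lemma subset_closedBall_sSup_dist {ι H : Type*} [Finite ι] [MetricSpace H] {Y : ι → Set H}
    (hbd : ∀ i, Bornology.IsBounded (Y i)) (o : H) (i : ι) :
    Y i ⊆ closedBall o (sSup ((fun p => dist p o) '' ⋃ i, Y i)) := by
  obtain ⟨R, hR⟩ := (Bornology.isBounded_iUnion.mpr hbd).subset_closedBall o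
  have hbdd : BddAbove ((fun p => dist p o) '' ⋃ i, Y i) := by
    refine ⟨R, ?_⟩
    rintro _ ⟨y, hy, rfl⟩
    exact hR hy
  exact fun y hy => le_csSup hbdd ⟨y, Set.mem_iUnion.mpr ⟨i, hy⟩, rfl⟩

/-- If between any two equal values of `f` in a window `r` rises above both ends, then the
position of the maximum of `r` carries a value of `f` seen nowhere else in the window; removing
it leaves two windows with fewer values of `f`. -/
theorem sub_lt_two_pow_of_separated {α β : Type*} [DecidableEq α] [LinearOrder β]
    (f : ℕ → α) (r : ℕ → β) {k s t : ℕ}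
    (hsep : ∀ a ∈ Ico s t, ∀ b ∈ Ico s t, a < b → f a = f b →
      ∃ j, a < j ∧ j < b ∧ max (r a) (r b) < r j)
    (hk : #((Ico s t).image f) ≤ k) : t - s < 2 ^ k := by
  induction k generalizing s t with
  | zero =>
    simp only [nonpos_iff_eq_zero, card_eq_zero, image_eq_empty, Ico_eq_empty_iff] at hk
    omega
  | succ k ih =>
    rcases (Ico s t).eq_empty_or_nonempty with hempty | hne
    · simp only [Ico_eq_empty_iff, not_lt] at hempty
      exact (Nat.sub_eq_zero_of_le hempty).trans_lt (by positivity)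
    obtain ⟨j₀, hj₀, hmax⟩ := exists_max_image (Ico s t) r hne
    have hunique : ∀ j ∈ Ico s t, f j = f j₀ → j = j₀ := by
      intro j hj hfj
      by_contra hne
      rcases Nat.lt_or_gt_of_ne hne with hlt | hlt
      · obtain ⟨i, hji, hij₀, hi⟩ := hsep j hj j₀ hj₀ hlt hfj
        exact (hmax i (by simp only [mem_Ico] at hj hj₀ ⊢; omega)).not_gt
          ((le_max_right _ _).trans_lt hi)
      · obtain ⟨i, hj₀i, hij, hi⟩ := hsep j₀ hj₀ j hj hlt hfj.symm
        exact (hmax i (by simp only [mem_Ico] at hj hj₀ ⊢; omega)).not_gt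
          ((le_max_left _ _).trans_lt hi)
    have hside : ∀ s' t', s ≤ s' → t' ≤ t → j₀ ∉ Ico s' t' → t' - s' < 2 ^ k := by
      intro s' t' hs' ht' hj₀'
      have hsub : Ico s' t' ⊆ Ico s t := Ico_subset_Ico hs' ht'
      refine ih (fun a ha b hb => hsep a (hsub ha) b (hsub hb)) ?_
      have : (Ico s' t').image f ⊆ ((Ico s t).image f).erase (f j₀) := by
        intro z hz
        obtain ⟨j, hj, rfl⟩ := mem_image.mp hz
        exact mem_erase.mpr ⟨fun h => hj₀' (hunique j (hsub hj) h ▸ hj),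
          mem_image_of_mem f (hsub hj)⟩
      have := card_le_card this
      rw [card_erase_of_mem (mem_image_of_mem f hj₀)] at this
      omega
    simp only [mem_Ico] at hj₀
    have hleft := hside s j₀ le_rfl hj₀.2.le (by simp)
    have hright := hside (j₀ + 1) t (by omega) le_rfl (by simp)
    rw [pow_succ]
    omega

theorem extremal_graph_path_bound_general {H : Type} [MetricSpace H] (δ : ℝ)
    (hhyp : IsDeltaHyperbolic H δ) (o : H)
    (μ ε : ℝ) (n : ℕ)
    (V : Type) [Fintype V] (color : V → Fin n)
    (Y : V → Set H) (hbd : ∀ v, Bornology.IsBounded (Y v)) (hne : ∀ v, (Y v).Nonempty)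
    (c : V → H) (hc : ∀ v, Y v ⊆ Metric.closedBall (c v) (setRadius (Y v) + ε))
    (hcol : ∀ v w : V, v ≠ w → color v = color w →
      setRadius (Y v) = setRadius (Y w) ∧
      2 * μ + (10 + 2 * (n : ℝ)) * δ + 4 * ε < dist (c v) (c w))
    (d : ℝ) (hd : d = sSup ((fun p => dist p o) '' ⋃ v, Y v))
    (m : ℕ) (vseq : Fin (m + 1) → V) (hinj : Function.Injective vseq)
    (hpath : ∀ j : Fin m, ∃ p : H, d - μ ≤ dist p o ∧
      p ∈ Y (vseq j.castSucc) ∧ p ∈ Y (vseq j.succ)) :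
    m ≤ 2 ^ n - 2 := by
  obtain ⟨hgeo, -, h4⟩ := hhyp
  change FourPointCondition H δ at h4
  have hcenter : ∀ v, dist (c v) o ≤ d - setRadius (Y v) + ε + 4 * δ := fun v => by
    have hYd := hd ▸ subset_closedBall_sSup_dist hbd o v
    linarith [h4.dist_le_of_subset_closedBall hgeo (hne v) hYd (hc v)]
  let w : ℕ → V := fun j => vseq (Fin.clamp j m)
  have hw : ∀ a b, a ≤ m → b ≤ m → a ≠ b → w a ≠ w b := fun a b ha hb hab h =>
    hab (by simpa [w, Fin.clamp_eq_of_le ha, Fin.clamp_eq_of_le hb] using hinj h)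
  have hedge : ∀ j < m, ∃ q, d - μ ≤ dist q o ∧ q ∈ Y (w j) ∧ q ∈ Y (w (j + 1)) := by
    intro j hj
    simp only [w, Fin.clamp_eq_of_le hj.le, Fin.clamp_eq_of_le hj]
    exact hpath ⟨j, hj⟩
  have : Nonempty H := ⟨o⟩
  choose! p hp using hedge
  by_contra hm
  have hm' : 2 ^ n ≤ m + 1 := by have := Nat.one_le_two_pow (n := n); omega
  refine (sub_lt_two_pow_of_separated (fun j => color (w j)) (fun j => setRadius (Y (w j)))
    (s := 0) (t := 2 ^ n) ?_ ((card_le_univ _).trans (Fintype.card_fin n).le)).false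
  intro a ha b hb hab hab_col
  simp only [mem_Ico] at ha hb
  obtain ⟨hr, hfar⟩ := hcol (w a) (w b) (hw a b (by omega) (by omega) hab.ne) hab_col
  refine h4.exists_lt_of_lt_dist o (c := fun j => c (w j)) (r := fun j => setRadius (Y (w j)))
    (p := p) (μ := μ) (k := n) hab (by omega) hr (hcenter _) (hcenter _) (fun j hj => ?_)
    (by linarith [h4.nonneg o])
  simp only [mem_Ico] at hj
  obtain ⟨hpo, hpj, hpj'⟩ := hp j (by omega)
  exact ⟨hpo, hc _ hpj, hc _ hpj'⟩

/-- Proposition 3.1 (path bound in the extremal graph): with `V` partitioned into `n`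
colors, bounded nonempty sets `Y_v` with radii `r_v` and `ε`-centers `c_v`, if vertices of
equal color have equal radii and far-apart centers, then every embedded path in the
`μ`-extremal graph (consecutive sets sharing a `μ`-extremal point) has length at most
`2ⁿ − 2`. -/
theorem extremal_graph_path_bound {H : Type} [MetricSpace H] (δ : ℝ)
    (hhyp : IsDeltaHyperbolic H δ) (o : H)
    (μ ε : ℝ) (hμ : 0 < μ) (hε : 0 < ε) (n : ℕ)
    (V : Type) [Fintype V] (color : V → Fin n)
    (Y : V → Set H) (hbd : ∀ v, Bornology.IsBounded (Y v)) (hne : ∀ v, (Y v).Nonempty)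
    (c : V → H) (hc : ∀ v, Y v ⊆ Metric.closedBall (c v) (setRadius (Y v) + ε))
    (hcol : ∀ v w : V, v ≠ w → color v = color w →
      setRadius (Y v) = setRadius (Y w) ∧
      2 * μ + (10 + 2 * (n : ℝ)) * δ + 4 * ε < dist (c v) (c w))
    (d : ℝ) (hd : d = sSup ((fun p => dist p o) '' ⋃ v, Y v))
    (m : ℕ) (vseq : Fin (m + 1) → V) (hinj : Function.Injective vseq)
    (hpath : ∀ j : Fin m, ∃ p : H, d - μ ≤ dist p o ∧
      p ∈ Y (vseq j.castSucc) ∧ p ∈ Y (vseq j.succ)) :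
    m ≤ 2 ^ n - 2 :=
  extremal_graph_path_bound_general δ hhyp o μ ε n V color Y hbd hne c hc hcol d hd m vseq hinj
    hpath
end
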